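/- Fix integers q ≥ 2 and d ≥ 0, and let l, l′ : {1,…,q−1} → ℕ with |l| := ∑_k l_k ≤ d and |l′| := ∑_k l′_k ≤ d. Then the multivariate Krawtchouk polynomials form a biorthogonal system with respect to the uniform multinomial distribution: ∑_{m} C(d;m)·q^{−d}·conj(Q_l(m))·Q_{l′}(m) = δ_{l,l′}·d!/((d−|l|)!·∏_{k=1}^{q−1} l_k!), where the sum is over all m : {0,…,q−1} → ℕ with ∑_j m_j = d. -/

import Mathlib

open scoped BigOperators

/-- `zE q n = exp(2πi·n/q)`. -/
noncomputable def zE (q n : ℕ) : ℂ :=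
  Complex.exp (2 * Real.pi * Complex.I * (n : ℂ) / q)

/-- The generating polynomial `∏_{j=0}^{q-1} (1 + ∑_{k=1}^{q-1} w_k ζ^{jk})^{m_j}` of the
multivariate Krawtchouk polynomials, in the variables `w_1,…,w_{q-1}`. -/
noncomputable def genPoly (q : ℕ) (m : ℕ → ℕ) : MvPolynomial ℕ ℂ :=
  ∏ j ∈ Finset.range q,
    (1 + ∑ k ∈ Finset.Icc 1 (q - 1),
        MvPolynomial.X k * MvPolynomial.C (zE q (j * k))) ^ m j

/-- The multivariate Krawtchouk polynomial value `Q_l(m)`: the coefficient of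
`∏_k w_k^{l_k}` in the generating polynomial. -/
noncomputable def mvKrawtchouk (q : ℕ) (l : ℕ →₀ ℕ) (m : ℕ → ℕ) : ℂ :=
  MvPolynomial.coeff l (genPoly q m)

section Aux

lemma expsum (q : ℕ) (hq : 0 < q) (t : ℤ) :
    ∑ j ∈ Finset.range q, Complex.exp (2 * Real.pi * Complex.I * t * j / q)
      = if (q : ℤ) ∣ t then (q : ℂ) else 0 := by
  have hq0 : (q : ℂ) ≠ 0 := Nat.cast_ne_zero.mpr hq.ne'
  set r : ℂ := Complex.exp (2 * Real.pi * Complex.I * t / q) with hr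
  have hterm : ∀ j : ℕ, Complex.exp (2 * Real.pi * Complex.I * t * j / q) = r ^ j := by
    intro j
    rw [hr, ← Complex.exp_nat_mul]
    ring_nf
  have hrq : r ^ q = 1 := by
    rw [hr, ← Complex.exp_nat_mul]
    have : (q : ℂ) * (2 * Real.pi * Complex.I * t / q) = t * (2 * Real.pi * Complex.I) := by
      field_simp
    rw [this, Complex.exp_int_mul_two_pi_mul_I]
  simp_rw [hterm]
  by_cases hdvd : (q : ℤ) ∣ t
  · obtain ⟨c, hc⟩ := id hdvd
    have : r = 1 := by
      rw [hr]
      have : 2 * Real.pi * Complex.I * t / q = c * (2 * Real.pi * Complex.I) := by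
        rw [hc]; push_cast; field_simp
      rw [this, Complex.exp_int_mul_two_pi_mul_I]
    simp [this, hdvd]
  · have hr1 : r ≠ 1 := by
      intro h
      rw [hr, Complex.exp_eq_one_iff] at h
      obtain ⟨n, hn⟩ := h
      apply hdvd
      refine ⟨n, ?_⟩
      have h2 : (2 * Real.pi * Complex.I) ≠ 0 := by
        simp [Real.pi_ne_zero, Complex.I_ne_zero, Complex.ofReal_ne_zero]
      have : (t : ℂ) = q * n := by
        field_simp at hn
        have h3 : (t:ℂ) * (2 * Real.pi * Complex.I) = (q:ℂ) * n * (2 * Real.pi * Complex.I) := by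
          linear_combination (2 * Real.pi * Complex.I) * hn
        exact mul_right_cancel₀ h2 h3
      exact_mod_cast this
    rw [geom_sum_eq hr1, hrq]
    simp [hdvd]

lemma zE_sum (q : ℕ) (hq : 2 ≤ q) {k : ℕ} (hk : k ∈ Finset.Icc 1 (q - 1)) :
    ∑ j ∈ Finset.range q, zE q (j * k) = 0 := by
  rw [Finset.mem_Icc] at hk
  have h1 : ∀ j : ℕ, zE q (j * k) = Complex.exp (2 * Real.pi * Complex.I * (k : ℤ) * j / q) := by
    intro j
    unfold zE
    congr 1
    push_cast
    ring
  simp_rw [h1]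
  rw [expsum q (by omega) k, if_neg]
  intro hdvd
  have hdvd' : q ∣ k := Int.natCast_dvd_natCast.mp hdvd
  have := Nat.le_of_dvd (by omega) hdvd'
  omega

lemma zE_conj_mul_sum (q : ℕ) (hq : 2 ≤ q) {k k' : ℕ}
    (hk : k ∈ Finset.Icc 1 (q - 1)) (hk' : k' ∈ Finset.Icc 1 (q - 1)) :
    ∑ j ∈ Finset.range q, (starRingEnd ℂ) (zE q (j * k)) * zE q (j * k')
      = if k = k' then (q : ℂ) else 0 := by
  rw [Finset.mem_Icc] at hk hk'
  have h1 : ∀ j : ℕ, (starRingEnd ℂ) (zE q (j * k)) * zE q (j * k')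
      = Complex.exp (2 * Real.pi * Complex.I * ((((k' : ℤ) - (k : ℤ)) : ℤ) : ℂ) * j / q) := by
    intro j
    unfold zE
    rw [← Complex.exp_conj, ← Complex.exp_add]
    congr 1
    have : (starRingEnd ℂ) (2 * Real.pi * Complex.I * ((j*k : ℕ) : ℂ) / q)
        = -(2 * Real.pi * Complex.I * ((j*k : ℕ) : ℂ) / q) := by
      simp [map_div₀, map_mul, map_ofNat, Complex.conj_I, Complex.conj_ofReal]
      ring
    rw [this]
    push_cast
    ring
  simp_rw [h1]
  rw [expsum q (by omega) ((k' : ℤ) - k)]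
  by_cases h : k = k'
  · rw [if_pos h, if_pos (by simp [h])]
  · rw [if_neg h, if_neg]
    intro hdvd
    have ht0 : ((k' : ℤ) - k) ≠ 0 := by
      intro h0
      exact h (by omega)
    have hle := Int.le_of_dvd (abs_pos.mpr ht0) ((dvd_abs _ _).mpr hdvd)
    have habs : |((k' : ℤ) - k)| < q := by
      rw [abs_lt]
      constructor <;> [skip; skip] <;>
        · have h1 : 1 ≤ k ∧ k < q := ⟨hk.1, by omega⟩
          have h2 : 1 ≤ k' ∧ k' < q := ⟨hk'.1, by omega⟩
          omega
    omega

/-- the basic factor of the generating polynomial -/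
noncomputable def bf (q j : ℕ) : MvPolynomial ℕ ℂ :=
  1 + ∑ k ∈ Finset.Icc 1 (q - 1), MvPolynomial.X k * MvPolynomial.C (zE q (j * k))

/-- combined factor in two sets of variables (inner variables as coefficients) -/
noncomputable def Fj (q j : ℕ) : MvPolynomial ℕ (MvPolynomial ℕ ℂ) :=
  (MvPolynomial.map MvPolynomial.C
      (MvPolynomial.map (starRingEnd ℂ) (bf q j))) * MvPolynomial.C (bf q j)

lemma genPoly_eq (q : ℕ) (m : ℕ → ℕ) : genPoly q m = ∏ j ∈ Finset.range q, (bf q j) ^ m j :=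
  rfl

lemma prod_Fj_pow (q : ℕ) (m : ℕ → ℕ) :
    ∏ j ∈ Finset.range q, Fj q j ^ m j
      = MvPolynomial.map MvPolynomial.C
          (MvPolynomial.map (starRingEnd ℂ) (genPoly q m)) *
        MvPolynomial.C (genPoly q m) := by
  simp only [Fj, genPoly_eq, mul_pow, Finset.prod_mul_distrib, map_prod, map_pow]

lemma coeff_coeff_mapC_mul_C (P Q : MvPolynomial ℕ ℂ) (l l' : ℕ →₀ ℕ) :
    MvPolynomial.coeff l' (MvPolynomial.coeff l (MvPolynomial.map MvPolynomial.C P *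
        MvPolynomial.C Q)) = MvPolynomial.coeff l P * MvPolynomial.coeff l' Q := by
  rw [mul_comm, MvPolynomial.coeff_C_mul, MvPolynomial.coeff_map, mul_comm,
    MvPolynomial.coeff_C_mul]

lemma coeff_coeff_prod_Fj (q : ℕ) (m : ℕ → ℕ) (l l' : ℕ →₀ ℕ) :
    MvPolynomial.coeff l' (MvPolynomial.coeff l (∏ j ∈ Finset.range q, Fj q j ^ m j))
      = (starRingEnd ℂ) (mvKrawtchouk q l m) * mvKrawtchouk q l' m := by
  rw [prod_Fj_pow, coeff_coeff_mapC_mul_C, MvPolynomial.coeff_map, mvKrawtchouk, mvKrawtchouk]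

lemma Fj_expand (q j : ℕ) :
    Fj q j = 1 + (∑ k ∈ Finset.Icc 1 (q - 1),
        MvPolynomial.X k * MvPolynomial.C (MvPolynomial.C ((starRingEnd ℂ) (zE q (j * k)))))
      + (∑ k ∈ Finset.Icc 1 (q - 1),
          MvPolynomial.C (MvPolynomial.X k * MvPolynomial.C (zE q (j * k))))
      + ∑ k ∈ Finset.Icc 1 (q - 1), ∑ k' ∈ Finset.Icc 1 (q - 1),
          MvPolynomial.X k * MvPolynomial.C (MvPolynomial.X k' *
            MvPolynomial.C ((starRingEnd ℂ) (zE q (j * k)) * zE q (j * k'))) := by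
  unfold Fj bf
  simp only [map_add, map_one, map_sum, map_mul, MvPolynomial.map_X, MvPolynomial.map_C]
  rw [add_mul, one_mul, mul_add, mul_one, Finset.sum_mul_sum]
  have hbody : ∀ a b c d : MvPolynomial ℕ (MvPolynomial ℕ ℂ), a * b * (c * d) = a * (c * (b * d)) := by
    intros; ring
  simp only [hbody]
  ring

lemma sum_Fj (q : ℕ) (hq : 2 ≤ q) :
    ∑ j ∈ Finset.range q, Fj q j
      = (q : MvPolynomial ℕ (MvPolynomial ℕ ℂ)) *
        (1 + ∑ k ∈ Finset.Icc 1 (q - 1), MvPolynomial.X k * MvPolynomial.C (MvPolynomial.X k)) := by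
  simp only [Fj_expand]
  rw [Finset.sum_add_distrib, Finset.sum_add_distrib, Finset.sum_add_distrib]
  have h1 : ∑ _j ∈ Finset.range q, (1 : MvPolynomial ℕ (MvPolynomial ℕ ℂ)) = (q : MvPolynomial ℕ (MvPolynomial ℕ ℂ)) := by
    simp
  have h2 : ∑ j ∈ Finset.range q, ∑ k ∈ Finset.Icc 1 (q - 1),
      MvPolynomial.X k * MvPolynomial.C (MvPolynomial.C ((starRingEnd ℂ) (zE q (j * k))))
      = (0 : MvPolynomial ℕ (MvPolynomial ℕ ℂ)) := by
    rw [Finset.sum_comm]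
    refine Finset.sum_eq_zero fun k hk => ?_
    simp only [← Finset.mul_sum, ← map_sum, ← map_sum]
    rw [zE_sum q hq hk]
    simp
  have h3 : ∑ j ∈ Finset.range q, ∑ k ∈ Finset.Icc 1 (q - 1),
      MvPolynomial.C (MvPolynomial.X k * MvPolynomial.C (zE q (j * k)))
      = (0 : MvPolynomial ℕ (MvPolynomial ℕ ℂ)) := by
    rw [Finset.sum_comm]
    refine Finset.sum_eq_zero fun k hk => ?_
    simp only [← map_sum, ← Finset.mul_sum]
    rw [zE_sum q hq hk]
    simp
  have h4 : ∑ j ∈ Finset.range q, ∑ k ∈ Finset.Icc 1 (q - 1), ∑ k' ∈ Finset.Icc 1 (q - 1),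
      MvPolynomial.X k * MvPolynomial.C (MvPolynomial.X k' *
        MvPolynomial.C ((starRingEnd ℂ) (zE q (j * k)) * zE q (j * k')))
      = (q : MvPolynomial ℕ (MvPolynomial ℕ ℂ)) *
          ∑ k ∈ Finset.Icc 1 (q - 1), MvPolynomial.X k * MvPolynomial.C (MvPolynomial.X k) := by
    rw [Finset.sum_comm]
    have hswap : ∀ k ∈ Finset.Icc 1 (q-1), ∑ j ∈ Finset.range q, ∑ k' ∈ Finset.Icc 1 (q - 1),
        MvPolynomial.X k * MvPolynomial.C (MvPolynomial.X k' *
          MvPolynomial.C ((starRingEnd ℂ) (zE q (j * k)) * zE q (j * k')))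
        = (q : MvPolynomial ℕ (MvPolynomial ℕ ℂ)) *
            (MvPolynomial.X k * MvPolynomial.C (MvPolynomial.X k)) := by
      intro k hk
      rw [Finset.sum_comm]
      have hinner : ∀ k' ∈ Finset.Icc 1 (q-1), ∑ j ∈ Finset.range q,
          MvPolynomial.X k * MvPolynomial.C (MvPolynomial.X k' *
            MvPolynomial.C ((starRingEnd ℂ) (zE q (j * k)) * zE q (j * k')))
          = if k = k' then (q : MvPolynomial ℕ (MvPolynomial ℕ ℂ)) *
              (MvPolynomial.X k * MvPolynomial.C (MvPolynomial.X k)) else 0 := by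
        intro k' hk'
        simp only [← Finset.mul_sum, ← map_sum]
        rw [zE_conj_mul_sum q hq hk hk']
        by_cases h : k = k'
        · subst h
          rw [if_pos rfl, if_pos rfl]
          have : MvPolynomial.C ((q : ℕ) : ℂ) = ((q:ℕ) : MvPolynomial ℕ ℂ) := by
            exact map_natCast MvPolynomial.C q
          push_cast
          rw [map_mul]
          rw [show (MvPolynomial.C ((q:ℕ) : ℂ) : MvPolynomial ℕ ℂ) = ((q:ℕ) : MvPolynomial ℕ ℂ) from map_natCast MvPolynomial.C q]
          rw [show (MvPolynomial.C ((q:ℕ) : MvPolynomial ℕ ℂ) : MvPolynomial ℕ (MvPolynomial ℕ ℂ)) = ((q:ℕ) : MvPolynomial ℕ (MvPolynomial ℕ ℂ)) from map_natCast MvPolynomial.C q]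
          ring
        · rw [if_neg h, if_neg h]
          simp
      rw [Finset.sum_congr rfl hinner, Finset.sum_ite_eq (Finset.Icc 1 (q-1)) k
        (fun _ => (q : MvPolynomial ℕ (MvPolynomial ℕ ℂ)) *
          (MvPolynomial.X k * MvPolynomial.C (MvPolynomial.X k))), if_pos hk]
    rw [Finset.sum_congr rfl hswap, Finset.mul_sum]
  rw [h1, h2, h3, h4]
  ring

lemma key_multinomial {A : Type*} [CommSemiring A] (q d : ℕ) (F : ℕ → A) :
    ∑ m ∈ Finset.Nat.antidiagonalTuple q d,
        (Nat.multinomial Finset.univ m : A) *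
          ∏ j ∈ Finset.range q, F j ^ (if h : j < q then m ⟨j, h⟩ else 0)
      = (∑ j ∈ Finset.range q, F j) ^ d := by
  rw [Finset.sum_pow_eq_sum_piAntidiag]
  refine Finset.sum_nbij' (fun m j => if h : j < q then m ⟨j, h⟩ else 0)
    (fun k i => k i.1) ?_ ?_ ?_ ?_ ?_
  · intro m hm
    rw [Finset.mem_piAntidiag]
    rw [Finset.Nat.mem_antidiagonalTuple] at hm
    constructor
    · rw [← Fin.sum_univ_eq_sum_range (fun j => if h : j < q then m ⟨j, h⟩ else 0) q, ← hm]
      exact Finset.sum_congr rfl fun i _ => by simp [i.isLt]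
    · intro i hi
      rw [Finset.mem_range]
      by_contra h
      simp [h] at hi
  · intro k hk
    rw [Finset.mem_piAntidiag] at hk
    rw [Finset.Nat.mem_antidiagonalTuple]
    rw [← hk.1, ← Fin.sum_univ_eq_sum_range (fun j => k j) q]
  · intro m _
    funext i
    simp [i.isLt]
  · intro k hk
    rw [Finset.mem_piAntidiag] at hk
    funext j
    by_cases h : j < q
    · simp [h]
    · simp only [dif_neg h]
      by_contra h0
      exact h (Finset.mem_range.mp (hk.2 j fun hh => h0 hh.symm))
  · intro m hm
    congr 1
    · congr 1
      unfold Nat.multinomial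
      congr 1
      · congr 1
        rw [← Fin.sum_univ_eq_sum_range (fun j => if h : j < q then m ⟨j, h⟩ else 0) q]
        exact Finset.sum_congr rfl fun i _ => by simp [i.isLt]
      · rw [← Fin.prod_univ_eq_prod_range (fun j => Nat.factorial (if h : j < q then m ⟨j, h⟩ else 0)) q]
        exact Finset.prod_congr rfl fun i _ => by simp [i.isLt]

lemma prod_X_pow_eq {B : Type*} [CommSemiring B] (t : Finset ℕ) (r : ℕ → ℕ) :
    (∏ k ∈ t, (MvPolynomial.X k : MvPolynomial ℕ B) ^ r k)
      = MvPolynomial.monomial (∑ k ∈ t, Finsupp.single k (r k)) 1 := by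
  classical
  induction t using Finset.induction with
  | empty => simp
  | insert _ _ h ih =>
      rw [Finset.prod_insert h, Finset.sum_insert h, ih, MvPolynomial.X_pow_eq_monomial,
        MvPolynomial.monomial_mul, one_mul]

lemma single_sum_apply (t : Finset ℕ) (r : ℕ → ℕ) (k' : ℕ) :
    (∑ k ∈ t, Finsupp.single k (r k)) k' = if k' ∈ t then r k' else 0 := by
  classical
  rw [Finsupp.finset_sum_apply]
  simp_rw [Finsupp.single_apply]
  exact Finset.sum_ite_eq' t k' r

lemma coeff_one_add_T_pow (q d : ℕ) (hq : 2 ≤ q) (l l' : ℕ →₀ ℕ)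
    (hl0 : ∀ k, k ∉ Finset.Icc 1 (q - 1) → l k = 0)
    (hl'0 : ∀ k, k ∉ Finset.Icc 1 (q - 1) → l' k = 0)
    (hl : ∑ k ∈ Finset.Icc 1 (q - 1), l k ≤ d) :
    MvPolynomial.coeff l' (MvPolynomial.coeff l
        ((1 + ∑ k ∈ Finset.Icc 1 (q - 1), MvPolynomial.X k * MvPolynomial.C (MvPolynomial.X k) :
          MvPolynomial ℕ (MvPolynomial ℕ ℂ)) ^ d))
      = if l = l' then
          (Nat.multinomial (insert 0 (Finset.Icc 1 (q - 1)))
            (fun k => if k = 0 then d - ∑ k ∈ Finset.Icc 1 (q - 1), l k else l k) : ℂ)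
        else 0 := by
  classical
  set s := Finset.Icc 1 (q - 1) with hs
  have h0s : 0 ∉ s := by simp [hs]
  set L := ∑ k ∈ s, l k with hL
  set g : ℕ → MvPolynomial ℕ (MvPolynomial ℕ ℂ) :=
    fun k => if k = 0 then 1 else MvPolynomial.X k * MvPolynomial.C (MvPolynomial.X k) with hg
  have hsplit : (1 + ∑ k ∈ s, MvPolynomial.X k * MvPolynomial.C (MvPolynomial.X k) :
      MvPolynomial ℕ (MvPolynomial ℕ ℂ)) = ∑ k ∈ insert 0 s, g k := by
    rw [Finset.sum_insert h0s]
    have h1 : g 0 = 1 := by simp [hg]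
    rw [h1]
    congr 1
    refine Finset.sum_congr rfl fun k hk => ?_
    have : k ≠ 0 := by rintro rfl; exact h0s hk
    simp [hg, this]
  rw [hsplit, Finset.sum_pow_eq_sum_piAntidiag, MvPolynomial.coeff_sum,
    MvPolynomial.coeff_sum]
  -- per-term value
  have hterm : ∀ r ∈ Finset.piAntidiag (insert 0 s) d,
      MvPolynomial.coeff l' (MvPolynomial.coeff l
          ((Nat.multinomial (insert 0 s) r : MvPolynomial ℕ (MvPolynomial ℕ ℂ)) *
            ∏ k ∈ insert 0 s, g k ^ r k))
        = (Nat.multinomial (insert 0 s) r : ℂ) *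
            (if (∑ k ∈ s, Finsupp.single k (r k)) = l then
              (if (∑ k ∈ s, Finsupp.single k (r k)) = l' then 1 else 0) else 0) := by
    intro r _
    have hprod : ∏ k ∈ insert 0 s, g k ^ r k
        = MvPolynomial.monomial (∑ k ∈ s, Finsupp.single k (r k)) (1 : MvPolynomial ℕ ℂ) *
          MvPolynomial.C (MvPolynomial.monomial (∑ k ∈ s, Finsupp.single k (r k)) (1 : ℂ)) := by
      rw [Finset.prod_insert h0s]
      have h0 : g 0 = 1 := by simp [hg]
      rw [h0, one_pow, one_mul]
      have : ∀ k ∈ s, g k ^ r k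
          = (MvPolynomial.X k) ^ r k * MvPolynomial.C ((MvPolynomial.X k : MvPolynomial ℕ ℂ) ^ r k) := by
        intro k hk
        have hk0 : k ≠ 0 := by rintro rfl; exact h0s hk
        rw [hg]
        simp only [if_neg hk0]
        rw [mul_pow, map_pow]
      rw [Finset.prod_congr rfl this, Finset.prod_mul_distrib, ← map_prod, prod_X_pow_eq,
        prod_X_pow_eq]
    rw [hprod]
    rw [show ((Nat.multinomial (insert 0 s) r : ℕ) : MvPolynomial ℕ (MvPolynomial ℕ ℂ))
        = MvPolynomial.C ((Nat.multinomial (insert 0 s) r : ℕ) : MvPolynomial ℕ ℂ) from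
      (map_natCast (MvPolynomial.C : MvPolynomial ℕ ℂ →+* MvPolynomial ℕ (MvPolynomial ℕ ℂ)) _).symm]
    rw [MvPolynomial.coeff_C_mul, mul_comm (MvPolynomial.monomial _ _), MvPolynomial.coeff_C_mul,
      MvPolynomial.coeff_monomial]
    rw [show ((Nat.multinomial (insert 0 s) r : ℕ) : MvPolynomial ℕ ℂ)
        = MvPolynomial.C ((Nat.multinomial (insert 0 s) r : ℕ) : ℂ) from
      (map_natCast (MvPolynomial.C : ℂ →+* MvPolynomial ℕ ℂ) _).symm]
    rw [MvPolynomial.coeff_C_mul]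
    congr 1
    rw [mul_ite, mul_one, mul_zero, apply_ite (MvPolynomial.coeff l'), MvPolynomial.coeff_monomial,
      MvPolynomial.coeff_zero]
  rw [Finset.sum_congr rfl hterm]
  -- now evaluate the sum of deltas
  have hteq : ∀ r : ℕ → ℕ, ((∑ k ∈ s, Finsupp.single k (r k)) = l) ↔ ∀ k ∈ s, r k = l k := by
    intro r
    constructor
    · intro h k hk
      have := DFunLike.congr_fun h k
      rwa [single_sum_apply, if_pos hk] at this
    · intro h
      ext k
      rw [single_sum_apply]
      by_cases hk : k ∈ s
      · rw [if_pos hk, h k hk]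
      · rw [if_neg hk, hl0 k hk]
  by_cases hll : l = l'
  · subst hll
    rw [if_pos rfl]
    set r₀ : ℕ → ℕ := fun k => if k = 0 then d - L else l k with hr₀
    have hr₀sum : ∑ k ∈ s, r₀ k = L := by
      rw [hL]
      refine Finset.sum_congr rfl fun k hk => ?_
      have : k ≠ 0 := by rintro rfl; exact h0s hk
      simp [hr₀, this]
    have hr₀mem : r₀ ∈ Finset.piAntidiag (insert 0 s) d := by
      rw [Finset.mem_piAntidiag]
      constructor
      · rw [Finset.sum_insert h0s, hr₀sum]
        have h00 : r₀ 0 = d - L := by simp [hr₀]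
        rw [if_pos rfl]
        omega
      · intro i hi
        rcases eq_or_ne i 0 with rfl | h0
        · exact Finset.mem_insert_self _ _
        · refine Finset.mem_insert_of_mem ?_
          by_contra hmem
          exact hi (by simp [hr₀, h0, hl0 i hmem])
    rw [Finset.sum_eq_single r₀]
    · have ht : (∑ k ∈ s, Finsupp.single k (r₀ k)) = l := by
        rw [hteq]
        intro k hk
        have : k ≠ 0 := by rintro rfl; exact h0s hk
        simp [hr₀, this]
      rw [if_pos ht, if_pos ht, mul_one]
    · intro r hr hne
      rw [Finset.mem_piAntidiag] at hr
      by_cases ht : (∑ k ∈ s, Finsupp.single k (r k)) = l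
      · exfalso
        apply hne
        have hrl := (hteq r).mp ht
        funext k
        rcases eq_or_ne k 0 with rfl | h0
        · have hsum := hr.1
          rw [Finset.sum_insert h0s] at hsum
          have : ∑ k ∈ s, r k = L := by
            rw [hL]; exact Finset.sum_congr rfl hrl
          simp only [hr₀, if_pos rfl]
          omega
        · by_cases hk : k ∈ s
          · simp only [hr₀, if_neg h0]
            exact hrl k hk
          · have hrk : r k = 0 := by
              by_contra h0'
              rcases Finset.mem_insert.mp (hr.2 k h0') with h | h
              · exact h0 h
              · exact hk h
            simp only [hr₀, if_neg h0]
            rw [hrk, hl0 k hk]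
      · rw [if_neg ht, mul_zero]
    · intro h
      exact absurd hr₀mem h
  · rw [if_neg hll]
    refine Finset.sum_eq_zero fun r _ => ?_
    by_cases ht : (∑ k ∈ s, Finsupp.single k (r k)) = l
    · rw [if_pos ht, if_neg (by rw [ht]; exact hll), mul_zero]
    · rw [if_neg ht, mul_zero]

lemma coeff_coeff_natCast_mul (N : ℕ) (P : MvPolynomial ℕ (MvPolynomial ℕ ℂ)) (a b : ℕ →₀ ℕ) :
    MvPolynomial.coeff b (MvPolynomial.coeff a
        ((N : MvPolynomial ℕ (MvPolynomial ℕ ℂ)) * P))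
      = (N : ℂ) * MvPolynomial.coeff b (MvPolynomial.coeff a P) := by
  rw [show ((N : ℕ) : MvPolynomial ℕ (MvPolynomial ℕ ℂ))
      = MvPolynomial.C ((N : ℕ) : MvPolynomial ℕ ℂ) from
    (map_natCast (MvPolynomial.C : MvPolynomial ℕ ℂ →+* MvPolynomial ℕ (MvPolynomial ℕ ℂ)) _).symm]
  rw [MvPolynomial.coeff_C_mul]
  rw [show ((N : ℕ) : MvPolynomial ℕ ℂ) = MvPolynomial.C ((N : ℕ) : ℂ) from
    (map_natCast (MvPolynomial.C : ℂ →+* MvPolynomial ℕ ℂ) _).symm]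
  rw [MvPolynomial.coeff_C_mul]

end Aux

/-- Biorthogonality of the multivariate Krawtchouk polynomials with respect to the uniform
multinomial distribution:
`∑_m C(d;m) q^{-d} conj(Q_l(m)) Q_{l'}(m) = δ_{l,l'} d!/((d-|l|)! ∏_k l_k!)`. -/
theorem mvKrawtchouk_biorthogonality (q d : ℕ) (hq : 2 ≤ q)
    (l l' : ℕ →₀ ℕ)
    (hl0 : ∀ k, k ∉ Finset.Icc 1 (q - 1) → l k = 0)
    (hl'0 : ∀ k, k ∉ Finset.Icc 1 (q - 1) → l' k = 0)
    (hl : ∑ k ∈ Finset.Icc 1 (q - 1), l k ≤ d)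
    (hl' : ∑ k ∈ Finset.Icc 1 (q - 1), l' k ≤ d) :
    ∑ m ∈ Finset.Nat.antidiagonalTuple q d,
        (Nat.multinomial Finset.univ m : ℂ) * ((q : ℂ) ^ d)⁻¹ *
          (starRingEnd ℂ) (mvKrawtchouk q l (fun j => if h : j < q then m ⟨j, h⟩ else 0)) *
          mvKrawtchouk q l' (fun j => if h : j < q then m ⟨j, h⟩ else 0)
      = (if l = l' then 1 else 0) * (d.factorial : ℂ) /
          (((d - ∑ k ∈ Finset.Icc 1 (q - 1), l k).factorial : ℂ) *
            ∏ k ∈ Finset.Icc 1 (q - 1), ((l k).factorial : ℂ)) := by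
  classical
  have hq0 : ((q : ℂ)) ^ d ≠ 0 := pow_ne_zero _ (Nat.cast_ne_zero.mpr (by omega))
  have h0s : (0 : ℕ) ∉ Finset.Icc 1 (q - 1) := by simp
  -- rewrite each summand as a double coefficient
  have hstep : ∀ m : Fin q → ℕ,
      (Nat.multinomial Finset.univ m : ℂ) * ((q : ℂ) ^ d)⁻¹ *
          (starRingEnd ℂ) (mvKrawtchouk q l (fun j => if h : j < q then m ⟨j, h⟩ else 0)) *
          mvKrawtchouk q l' (fun j => if h : j < q then m ⟨j, h⟩ else 0)
        = ((q : ℂ) ^ d)⁻¹ * MvPolynomial.coeff l' (MvPolynomial.coeff l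
            ((Nat.multinomial Finset.univ m : MvPolynomial ℕ (MvPolynomial ℕ ℂ)) *
              ∏ j ∈ Finset.range q, Fj q j ^ (if h : j < q then m ⟨j, h⟩ else 0))) := by
    intro m
    rw [coeff_coeff_natCast_mul, coeff_coeff_prod_Fj]
    ring
  rw [Finset.sum_congr rfl fun m _ => hstep m, ← Finset.mul_sum]
  simp_rw [← MvPolynomial.coeff_sum]
  rw [key_multinomial q d (Fj q), sum_Fj q hq, mul_pow,
    show ((q : MvPolynomial ℕ (MvPolynomial ℕ ℂ)) ^ d) = ((q ^ d : ℕ) :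
      MvPolynomial ℕ (MvPolynomial ℕ ℂ)) by push_cast; ring,
    coeff_coeff_natCast_mul, coeff_one_add_T_pow q d hq l l' hl0 hl'0 hl]
  rw [← mul_assoc]
  rw [show (((q ^ d : ℕ) : ℂ)) = (q : ℂ) ^ d by push_cast; ring, inv_mul_cancel₀ hq0, one_mul]
  -- final numeric identity
  by_cases hll : l = l'
  · rw [if_pos hll, if_pos hll, one_mul]
    set s := Finset.Icc 1 (q - 1) with hs
    set L := ∑ k ∈ s, l k with hL
    set r₀ : ℕ → ℕ := fun k => if k = 0 then d - L else l k with hr₀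
    have hspec := Nat.multinomial_spec (insert 0 s) r₀
    have hsum : ∑ k ∈ insert 0 s, r₀ k = d := by
      rw [Finset.sum_insert h0s]
      have h1 : ∑ k ∈ s, r₀ k = L := by
        rw [hL]
        refine Finset.sum_congr rfl fun k hk => ?_
        have : k ≠ 0 := by rintro rfl; exact h0s hk
        simp [hr₀, this]
      rw [h1]
      have h2 : r₀ 0 = d - L := by simp [hr₀]
      omega
    have hprodfac : ∏ k ∈ insert 0 s, (r₀ k).factorial
        = (d - L).factorial * ∏ k ∈ s, (l k).factorial := by
      rw [Finset.prod_insert h0s]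
      have h2 : (r₀ 0).factorial = (d - L).factorial := by simp [hr₀]
      rw [h2]
      congr 1
      refine Finset.prod_congr rfl fun k hk => ?_
      have hk0 : k ≠ 0 := by rintro rfl; exact h0s hk
      simp [hr₀, hk0]
    rw [hsum, hprodfac] at hspec
    have hden : (((d - L).factorial : ℂ) * ∏ k ∈ s, ((l k).factorial : ℂ)) ≠ 0 := by
      refine mul_ne_zero ?_ ?_
      · exact_mod_cast Nat.cast_ne_zero.mpr (Nat.factorial_ne_zero _)
      · refine Finset.prod_ne_zero_iff.mpr fun k _ => ?_
        exact_mod_cast Nat.cast_ne_zero.mpr (Nat.factorial_ne_zero _)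
    rw [eq_div_iff hden]
    have := congrArg (fun n : ℕ => (n : ℂ)) hspec
    push_cast at this ⊢
    linear_combination this
  · rw [if_neg hll, if_neg hll, zero_mul, zero_div]
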